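/- arXiv:2211.05127 — 2 statements merged into one kernel-verified Lean document; each statement's English description precedes it below -/
import Mathlib

section
/- For all tuples a, b, c, d ∈ ℕ, (1/(2π)²) ∫_{−π}^{π} ∫_{−π}^{π} e^{iθ(a+b−c−d)} e^{iφ(a²+b²−c²−d²)} dθ dφ = δ_{ac}δ_{bd} + δ_{ad}δ_{bc} − δ_{ab}δ_{ac}δ_{ad}. -/
open MeasureTheory Complex

/-- Kronecker delta with values in ℂ. -/
noncomputable def kdeltaC (x y : ℕ) : ℂ := if x = y then 1 else 0

lemma phase_int (n : ℤ) :
    ∫ x in (-Real.pi)..Real.pi, Complex.exp (Complex.I * x * (n : ℂ))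
      = if n = 0 then (2 * Real.pi : ℂ) else 0 := by
  have hconv : ∀ x : ℝ, Complex.exp (Complex.I * x * (n : ℂ))
      = Complex.exp ((Complex.I * n) * x) := by
    intro x; ring_nf
  simp only [hconv]
  by_cases hn : n = 0
  · simp [hn, sub_neg_eq_add]
    ring
  · have hc : (Complex.I * n) ≠ 0 := by
      simp [Complex.I_ne_zero, hn]
    rw [integral_exp_mul_complex hc, if_neg hn]
    have h2 : Complex.exp (Complex.I * n * Real.pi) = Complex.exp (Complex.I * n * (-Real.pi)) := by
      rw [show (Complex.I * n * Real.pi : ℂ)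
          = Complex.I * n * (-Real.pi) + n * (2 * Real.pi * Complex.I) by ring,
        Complex.exp_add, Complex.exp_int_mul_two_pi_mul_I, mul_one]
    rw [h2]
    simp

theorem kerred_phase_integral (a b c d : ℕ) :
    (1 / (2 * Real.pi) ^ 2 : ℂ) *
      ∫ φ in (-Real.pi)..Real.pi,
        ∫ θ in (-Real.pi)..Real.pi,
          Complex.exp (Complex.I * θ * (((a : ℤ) + b - c - d : ℤ) : ℂ)) *
            Complex.exp (Complex.I * φ *
              (((a : ℤ) ^ 2 + (b : ℤ) ^ 2 - (c : ℤ) ^ 2 - (d : ℤ) ^ 2 : ℤ) : ℂ))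
      = kdeltaC a c * kdeltaC b d + kdeltaC a d * kdeltaC b c
          - kdeltaC a b * kdeltaC a c * kdeltaC a d := by
  set n : ℤ := (a : ℤ) + b - c - d with hn
  set m : ℤ := (a : ℤ) ^ 2 + (b : ℤ) ^ 2 - (c : ℤ) ^ 2 - (d : ℤ) ^ 2 with hm
  have step1 : ∀ φ : ℝ,
      (∫ θ in (-Real.pi)..Real.pi,
        Complex.exp (Complex.I * θ * (n : ℂ)) * Complex.exp (Complex.I * φ * (m : ℂ)))
      = (if n = 0 then (2 * Real.pi : ℂ) else 0) * Complex.exp (Complex.I * φ * (m : ℂ)) := by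
    intro φ
    rw [intervalIntegral.integral_mul_const, phase_int]
  simp only [step1]
  rw [intervalIntegral.integral_const_mul, phase_int]
  have hiff : (n = 0 ∧ m = 0) ↔ ((a = c ∧ b = d) ∨ (a = d ∧ b = c)) := by
    constructor
    · rintro ⟨h1, h2⟩
      have hz : ((a : ℤ) - c) * ((a : ℤ) - d) = 0 := by nlinarith [hn, hm]
      rcases mul_eq_zero.mp hz with h | h
      · left; omega
      · right; omega
    · rintro (⟨h1, h2⟩ | ⟨h1, h2⟩) <;> subst h1 <;> subst h2 <;>
        exact ⟨by rw [hn]; ring, by rw [hm]; ring⟩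
  have hrhs : kdeltaC a c * kdeltaC b d + kdeltaC a d * kdeltaC b c
      - kdeltaC a b * kdeltaC a c * kdeltaC a d
      = if (a = c ∧ b = d) ∨ (a = d ∧ b = c) then 1 else 0 := by
    unfold kdeltaC
    split_ifs <;> norm_num <;> omega
  rw [hrhs]
  have hpi : (Real.pi : ℂ) ≠ 0 := by
    exact_mod_cast Real.pi_ne_zero
  by_cases h1 : n = 0 <;> by_cases h2 : m = 0
  · rw [if_pos h1, if_pos h2, if_pos (hiff.mp ⟨h1, h2⟩)]
    field_simp
  · rw [if_pos h1, if_neg h2, if_neg (fun h => h2 (hiff.mpr h).2)]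
    ring
  · rw [if_neg h1, if_pos h2, if_neg (fun h => h1 (hiff.mpr h).1)]
    ring
  · rw [if_neg h1, if_neg h2, if_neg (fun h => h1 (hiff.mpr h).1)]
    ring
end

section
/- Fix an integer t ≥ 2 and let Λ_t : ℕᵗ → ℝ be defined by Λ_t(a) = (1/t!) · (number of permutations σ ∈ S_t with a_{σ(i)} = a_i for all i) — equivalently Λ_t(a) = (Π_j m_j!)/t! where m_j is the multiplicity of value j in the tuple a. Then there is no σ-finite measure space (X, Σ, μ) together with measurable functions pᵢ : X → [0,1] (i ∈ ℕ) satisfying Σᵢ pᵢ(x) = 1 for a.e. x, and ∫_X Π_{l=1}^t p_{a_l}(x) dμ(x) = Λ_t(a) for every tuple a ∈ ℕᵗ. -/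
open MeasureTheory Filter

/-- `Λ_t(a)`: the diagonal entries of the symmetric projector in the Fock basis,
`(number of permutations fixing the tuple a) / t!`. -/
noncomputable def LambdaT (t : ℕ) (a : Fin t → ℕ) : ℝ :=
  ((Finset.univ.filter (fun σ : Equiv.Perm (Fin t) => ∀ i, a (σ i) = a i)).card : ℝ) /
    (t.factorial : ℝ)

lemma LambdaT_pos (t : ℕ) (a : Fin t → ℕ) : 0 < LambdaT t a := by
  apply div_pos
  · have : (1 : Equiv.Perm (Fin t)) ∈
        Finset.univ.filter (fun σ : Equiv.Perm (Fin t) => ∀ i, a (σ i) = a i) := by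
      simp
    exact_mod_cast Finset.card_pos.mpr ⟨_, this⟩
  · exact_mod_cast t.factorial_pos

lemma LambdaT_le_one (t : ℕ) (a : Fin t → ℕ) : LambdaT t a ≤ 1 := by
  rw [LambdaT, div_le_one (by exact_mod_cast t.factorial_pos)]
  have := Finset.card_filter_le Finset.univ (fun σ : Equiv.Perm (Fin t) => ∀ i, a (σ i) = a i)
  have hcard : (Finset.univ : Finset (Equiv.Perm (Fin t))).card = t.factorial := by
    simp [Fintype.card_perm]
  exact_mod_cast hcard ▸ this

def desA1 (s i : ℕ) : Fin (s+2) → ℕ := fun l => if l = 0 then i else 0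
def desA2 (s i : ℕ) : Fin (s+2) → ℕ := fun l => if l = 0 ∨ l = 1 then i else 0

lemma prod_desA1 (s i : ℕ) (f : ℕ → ℝ) :
    ∏ l, f (desA1 s i l) = f i * (f 0)^(s+1) := by
  rw [Fin.prod_univ_succ]
  simp [desA1, Fin.succ_ne_zero, Finset.prod_const]

lemma prod_desA2 (s i : ℕ) (f : ℕ → ℝ) :
    ∏ l, f (desA2 s i l) = f i * (f i * (f 0)^s) := by
  rw [Fin.prod_univ_succ, Fin.prod_univ_succ]
  have h1 : ∀ l : Fin s, (l.succ.succ : Fin (s+2)) ≠ 0 := fun l => Fin.succ_ne_zero _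
  have h2 : ∀ l : Fin s, (l.succ.succ : Fin (s+2)) ≠ 1 := by
    intro l h
    have : (l.succ.succ : Fin (s+2)) = Fin.succ 0 := by simpa using h
    exact Fin.succ_ne_zero _ (Fin.succ_injective _ this)
  simp [desA2, Fin.succ_ne_zero, h1, h2, Finset.prod_const]

lemma desA1_key (s j : ℕ) (hj : j ≠ 0) (σ : Equiv.Perm (Fin (s+2))) :
    (∀ l, desA1 s j (σ l) = desA1 s j l) ↔ (∀ l, σ l = 0 ↔ l = 0) := by
  simp only [desA1]
  constructor
  · intro h l
    have hl := h l
    by_cases h1 : σ l = 0 <;> by_cases h2 : l = 0 <;>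
      simp [h1, h2] at hl ⊢ <;> omega
  · intro h l
    simp [h l]

lemma LambdaT_desA1_eq (s i : ℕ) (hi : i ≠ 0) :
    LambdaT (s+2) (desA1 s i) = LambdaT (s+2) (desA1 s 1) := by
  unfold LambdaT
  congr 3
  ext σ
  simp only [Finset.mem_filter, Finset.mem_univ, true_and]
  rw [desA1_key s i hi σ, desA1_key s 1 one_ne_zero σ]

theorem no_infinite_simplex_design (t : ℕ) (ht : 2 ≤ t) :
    ¬ ∃ (X : Type) (_ : MeasurableSpace X) (μ : Measure X) (_ : SigmaFinite μ)
        (p : ℕ → X → ℝ),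
      (∀ i, Measurable (p i)) ∧
      (∀ i x, p i x ∈ Set.Icc (0 : ℝ) 1) ∧
      (∀ᵐ x ∂μ, HasSum (fun i => p i x) 1) ∧
      (∀ a : Fin t → ℕ, (∫ x, ∏ l, p (a l) x ∂μ) = LambdaT t a) := by
  rintro ⟨X, mX, μ, hσ, p, hmeas, hmem, hsum, hint⟩
  obtain ⟨s, rfl⟩ : ∃ s, t = s + 2 := ⟨t - 2, by omega⟩
  -- basic positivity
  have hp0 : ∀ j x, (0:ℝ) ≤ p j x := fun j x => (hmem j x).1
  -- the three families of functions
  set G : ℕ → X → ℝ := fun i x => ∏ l, p (desA1 s i l) x with hG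
  set H : ℕ → X → ℝ := fun i x => ∏ l, p (desA2 s i l) x with hHdef
  set F0 : X → ℝ := fun x => ∏ l : Fin (s+2), p ((fun _ : Fin (s+2) => 0) l) x with hF0def
  -- integrability of all moment functions
  have hInt : ∀ a : Fin (s+2) → ℕ, Integrable (fun x => ∏ l, p (a l) x) μ := by
    intro a
    by_contra h
    have h0 := hint a
    rw [integral_undef h] at h0
    exact absurd h0.symm (ne_of_gt (LambdaT_pos _ _))
  have hMeas : ∀ a : Fin (s+2) → ℕ, Measurable (fun x => ∏ l, p (a l) x) :=
    fun a => Finset.measurable_prod _ (fun l _ => hmeas _)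
  have hGnn : ∀ i x, 0 ≤ G i x := fun i x => Finset.prod_nonneg fun l _ => hp0 _ x
  have hHnn : ∀ i x, 0 ≤ H i x := fun i x => Finset.prod_nonneg fun l _ => hp0 _ x
  have hF0nn : ∀ x, 0 ≤ F0 x := fun x => Finset.prod_nonneg fun l _ => hp0 _ x
  -- the constant c and M
  set c : ℝ := LambdaT (s+2) (desA1 s 1) with hcdef
  have hc : 0 < c := LambdaT_pos _ _
  set M : ℝ := 2 / c with hMdef
  have hM : 0 < M := by positivity
  -- ψ i = min (G i) (M * F0)
  set ψ : ℕ → X → ℝ := fun i x => min (G i x) (M * F0 x) with hψdef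
  have hψnn : ∀ i x, 0 ≤ ψ i x := fun i x => le_min (hGnn i x) (mul_nonneg hM.le (hF0nn x))
  have hψle : ∀ i x, ψ i x ≤ M * F0 x := fun i x => min_le_right _ _
  have hψmeas : ∀ i, Measurable (ψ i) := by
    intro i
    exact (hMeas (desA1 s i)).min ((hMeas (fun _ => 0)).const_mul M)
  have hψint : ∀ i, Integrable (ψ i) μ := by
    intro i
    refine Integrable.mono' ((hInt (fun _ => 0)).const_mul M)
      (hψmeas i).aestronglyMeasurable ?_
    filter_upwards with x
    rw [Real.norm_eq_abs, abs_of_nonneg (hψnn i x)]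
    exact hψle i x
  -- key pointwise identity  G² = H · F0
  have hsq : ∀ i x, G i x * G i x = H i x * F0 x := by
    intro i x
    simp only [hG, hHdef, hF0def, prod_desA1 s i (fun j => p j x),
      prod_desA2 s i (fun j => p j x), Finset.prod_const, Finset.card_univ, Fintype.card_fin]
    ring
  -- key pointwise inequality
  have hkey : ∀ i x, M * G i x ≤ M * ψ i x + H i x := by
    intro i x
    rcases le_total (G i x) (M * F0 x) with h | h
    · have : ψ i x = G i x := min_eq_left h
      rw [this]
      nlinarith [hHnn i x]
    · have hmin : ψ i x = M * F0 x := min_eq_right h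
      rw [hmin]
      rcases eq_or_lt_of_le (hGnn i x) with h0 | h0
      · rw [← h0, mul_zero]
        have := mul_nonneg hM.le (mul_nonneg hM.le (hF0nn x))
        linarith [hHnn i x]
      · have h1 : M * G i x * G i x ≤ H i x * G i x := by
          calc M * G i x * G i x = (M * F0 x) * H i x := by
                linear_combination M * hsq i x
          _ ≤ G i x * H i x := mul_le_mul_of_nonneg_right h (hHnn i x)
          _ = H i x * G i x := by ring
        have h2 : M * G i x ≤ H i x := le_of_mul_le_mul_right h1 h0
        linarith [mul_nonneg hM.le (mul_nonneg hM.le (hF0nn x))]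
  -- integral inequality for i ≠ 0 :  M * c ≤ M * ∫ ψ i + 1
  have hIneq : ∀ i : ℕ, i ≠ 0 → M * c ≤ M * (∫ x, ψ i x ∂μ) + 1 := by
    intro i hi
    have hGint : (∫ x, G i x ∂μ) = c := by
      rw [hG]
      rw [hint (desA1 s i)]
      exact LambdaT_desA1_eq s i hi
    have hHle : (∫ x, H i x ∂μ) ≤ 1 := by
      rw [hHdef, hint (desA2 s i)]
      exact LambdaT_le_one _ _
    have step : (∫ x, M * G i x ∂μ) ≤ ∫ x, (M * ψ i x + H i x) ∂μ := by
      refine integral_mono ((hInt (desA1 s i)).const_mul M)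
        (((hψint i).const_mul M).add (hInt (desA2 s i))) ?_
      intro x
      exact hkey i x
    rw [integral_const_mul, hGint] at step
    rw [integral_add ((hψint i).const_mul M) (hInt (desA2 s i)), integral_const_mul] at step
    linarith
  -- lower bound:  ∫ ψ i ≥ c / 2 for i ≠ 0
  have hLower : ∀ i : ℕ, i ≠ 0 → c / 2 ≤ ∫ x, ψ i x ∂μ := by
    intro i hi
    have h1 := hIneq i hi
    have hMc : M * c = 2 := by
      rw [hMdef]; field_simp
    rw [hMc] at h1
    have h2 : 1 ≤ M * (∫ x, ψ i x ∂μ) := by linarith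
    have h3 : (1:ℝ) / M = c / 2 := by
      rw [hMdef]; field_simp
    calc c / 2 = 1 / M := h3.symm
    _ ≤ ∫ x, ψ i x ∂μ := by
        rw [div_le_iff₀ hM]
        nlinarith [h2]
  -- dominated convergence:  ∫ ψ (n+1) → 0
  have hTend : Tendsto (fun n : ℕ => ∫ x, ψ (n+1) x ∂μ) atTop (nhds 0) := by
    have := MeasureTheory.tendsto_integral_of_dominated_convergence
      (F := fun n : ℕ => ψ (n+1)) (f := fun _ => (0:ℝ)) (bound := fun x => M * F0 x)
      (fun n => (hψmeas (n+1)).aestronglyMeasurable)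
      ((hInt (fun _ => 0)).const_mul M)
      (fun n => by
        filter_upwards with x
        rw [Real.norm_eq_abs, abs_of_nonneg (hψnn _ x)]
        exact hψle _ x)
      (by
        filter_upwards [hsum] with x hx
        have h0 : Tendsto (fun i : ℕ => p i x) atTop (nhds 0) :=
          hx.summable.tendsto_atTop_zero
        have h1 : Tendsto (fun n : ℕ => p (n+1) x) atTop (nhds 0) :=
          h0.comp (tendsto_add_atTop_nat 1)
        have h2 : Tendsto (fun n : ℕ => G (n+1) x) atTop (nhds 0) := by
          have : ∀ n : ℕ, G (n+1) x = p (n+1) x * (p 0 x)^(s+1) := by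
            intro n
            exact prod_desA1 s (n+1) (fun j => p j x)
          simp only [this]
          simpa using h1.mul_const ((p 0 x)^(s+1))
        have h3 : Tendsto (fun n : ℕ => ψ (n+1) x) atTop (nhds (min 0 (M * F0 x))) :=
          h2.min tendsto_const_nhds
        rwa [min_eq_left (mul_nonneg hM.le (hF0nn x))] at h3)
    simpa using this
  -- contradiction
  have hfin : c / 2 ≤ 0 :=
    ge_of_tendsto' hTend (fun n => hLower (n+1) (Nat.succ_ne_zero n))
  linarith
end
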